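/- Let α : ℕ → Fin (a+2), define D on positive naturals by D(n) = max{α(k) : λ(n) ≤ k ≤ μ(n)}, and let h be a strictly increasing apart sequence with all adjacent sums D-colored m. Then for all i < j, max{α(k) : λ(h i) ≤ k ≤ μ(h j)} = m. -/

import Mathlib

/-- λ(n): the 2-adic valuation of n (least exponent in binary expansion). -/
def lam (n : ℕ) : ℕ := padicValNat 2 n

/-- μ(n): ⌊log₂ n⌋ (greatest exponent in binary expansion). -/
def mu (n : ℕ) : ℕ := Nat.log 2 n

/-- Apartness condition for a sequence. -/
def Apart (h : ℕ → ℕ) : Prop := ∀ i j, i < j → mu (h i) < lam (h j)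

/-- Sum of adjacent elements h i + h (i+1) + ... + h j. -/
def adjSum (h : ℕ → ℕ) (i j : ℕ) : ℕ := ∑ t ∈ Finset.Icc i j, h t

/-! Apartness makes the binary supports of consecutive terms disjoint and ordered, so adding
`h (j + 1)` to `h i + ⋯ + h j` keeps the lowest set bit of the sum and raises its highest set bit
to that of `h (j + 1)`. Hence `λ (h i + ⋯ + h j) = λ (h i)` and `μ (h i + ⋯ + h j) = μ (h j)`, and
the `D`-colour of the adjacent sum is exactly the maximum in the theorem. -/

lemma lam_le_mu (n : ℕ) : lam n ≤ mu n :=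
  padicValNat_le_nat_log n

lemma lam_add_of_lam_lt {x y : ℕ} (hx : 0 < x) (hy : 0 < y) (hxy : lam x < lam y) :
    lam (x + y) = lam x := by
  have hval : padicValRat 2 x < padicValRat 2 y := by
    simpa only [lam, padicValRat.of_nat, Nat.cast_lt] using hxy
  have hsum := padicValRat.add_eq_of_lt (p := 2) (by positivity) (by positivity) (by positivity)
    hval
  rw [← Nat.cast_add, padicValRat.of_nat, padicValRat.of_nat] at hsum
  exact_mod_cast hsum

lemma mu_add_of_lt_two_pow_lam {x y : ℕ} (hy : 0 < y) (hxy : x < 2 ^ lam y) :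
    mu (x + y) = mu y := by
  -- `2 ^ (μ y + 1) - y` is a positive multiple of `2 ^ λ y`, which leaves room for `x`.
  have hgap : 2 ^ lam y ∣ 2 ^ (mu y + 1) - y :=
    Nat.dvd_sub (pow_dvd_pow 2 (Nat.le_succ_of_le (lam_le_mu y))) pow_padicValNat_dvd
  have hlt : y < 2 ^ (mu y + 1) := Nat.lt_pow_succ_log_self one_lt_two y
  have hgap_le : 2 ^ lam y ≤ 2 ^ (mu y + 1) - y := Nat.le_of_dvd (by omega) hgap
  refine Nat.log_eq_of_pow_le_of_lt_pow ?_ (by omega)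
  exact (Nat.pow_log_le_self 2 hy.ne').trans (Nat.le_add_left y x)

lemma adjSum_self (h : ℕ → ℕ) (i : ℕ) : adjSum h i i = h i := by
  simp only [adjSum, Finset.Icc_self, Finset.sum_singleton]

lemma adjSum_succ (h : ℕ → ℕ) {i j : ℕ} (hij : i ≤ j) :
    adjSum h i (j + 1) = adjSum h i j + h (j + 1) :=
  Finset.sum_Icc_succ_top (Nat.le_succ_of_le hij) h

lemma adjSum_pos {h : ℕ → ℕ} (hpos : ∀ i, 0 < h i) {i j : ℕ} (hij : i ≤ j) :
    0 < adjSum h i j :=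
  Finset.sum_pos (fun t _ => hpos t) ⟨i, Finset.mem_Icc.mpr ⟨le_rfl, hij⟩⟩

namespace Apart

variable {h : ℕ → ℕ}

lemma mu_adjSum (hap : Apart h) (hpos : ∀ i, 0 < h i) {i j : ℕ} (hij : i ≤ j) :
    mu (adjSum h i j) = mu (h j) := by
  induction j, hij using Nat.le_induction with
  | base => rw [adjSum_self]
  | succ j hij ih =>
    rw [adjSum_succ h hij, mu_add_of_lt_two_pow_lam (hpos _)]
    have hap_succ : mu (adjSum h i j) < lam (h (j + 1)) := ih ▸ hap j (j + 1) j.lt_succ_self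
    exact Nat.lt_pow_of_log_lt one_lt_two hap_succ

lemma lam_adjSum (hap : Apart h) (hpos : ∀ i, 0 < h i) {i j : ℕ} (hij : i ≤ j) :
    lam (adjSum h i j) = lam (h i) := by
  induction j, hij using Nat.le_induction with
  | base => rw [adjSum_self]
  | succ j hij ih =>
    rw [adjSum_succ h hij, lam_add_of_lam_lt (adjSum_pos hpos hij) (hpos _), ih]
    calc lam (adjSum h i j) ≤ mu (adjSum h i j) := lam_le_mu _
      _ = mu (h j) := hap.mu_adjSum hpos hij
      _ < lam (h (j + 1)) := hap j (j + 1) j.lt_succ_self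

end Apart

theorem adjSum_color_max_general (a : ℕ) (α : ℕ → Fin (a + 2))
    (D : ℕ → Fin (a + 2))
    (hD : ∀ n, D n = (Finset.Icc (lam n) (mu n)).sup α)
    (h : ℕ → ℕ) (hpos : ∀ i, 0 < h i) (hap : Apart h)
    (m : Fin (a + 2)) (hhom : ∀ i j, i ≤ j → D (adjSum h i j) = m) :
    ∀ i j, i < j → (Finset.Icc (lam (h i)) (mu (h j))).sup α = m := by
  intro i j hij
  rw [← hap.lam_adjSum hpos hij.le, ← hap.mu_adjSum hpos hij.le, ← hD]
  exact hhom i j hij.le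

theorem adjSum_color_max (a : ℕ) (α : ℕ → Fin (a + 2))
    (D : ℕ → Fin (a + 2))
    (hD : ∀ n, D n = (Finset.Icc (lam n) (mu n)).sup α)
    (h : ℕ → ℕ) (hmono : StrictMono h) (hpos : ∀ i, 0 < h i) (hap : Apart h)
    (m : Fin (a + 2)) (hhom : ∀ i j, i ≤ j → D (adjSum h i j) = m) :
    ∀ i j, i < j → (Finset.Icc (lam (h i)) (mu (h j))).sup α = m :=
  adjSum_color_max_general a α D hD h hpos hap m hhom
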